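/- A convex polygon is strict if and only if it is quasi-strict. That is, for a polygon whose union of edges equals the boundary of the convex hull of its vertices, no three distinct-index vertices are collinear if and only if no two adjacent vertices are collinear with any third vertex. -/

import Mathlib

/-!
Quasi-strictness already forces the vertices to be distinct and not all on one line, so the
hull `K` of the polygon has interior. Suppose `V b` lies strictly between `V a` and `V c`. As a
point of an edge, `V b` is on the boundary of `K`, so a supporting functional `f` exposes a face
`F ∋ V b` of `K`. Faces are extreme and convex, so `F` contains `V a`, `V c` and the segment
between them. A point of that segment which is not a vertex is on the boundary of `K`, hence
strictly inside some edge, whose endpoints then also lie in `F`. Since `F` lies on a line, these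
two endpoints and one of `V a, V b, V c` different from both are three collinear vertices,
contradicting quasi-strictness.
-/

/-- Determinant of the 3×3 matrix with rows (1,x_P,y_P), (1,x_Q,y_Q), (1,x_R,y_R). -/
def det3 (P Q R : ℝ × ℝ) : ℝ :=
  Matrix.det !![1, P.1, P.2; 1, Q.1, Q.2; 1, R.1, R.2]

/-- Dot product on ℝ². -/
def dot2 (a b : ℝ × ℝ) : ℝ := a.1 * b.1 + a.2 * b.2

/-- The points of `S` lie strictly to one side of the segment `[P,Q]`:
there is a line through `P` and `Q` (with normal `nv`) such that all of `S`
lies in one of the open half-planes it bounds. -/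
def StrictSide (P Q : ℝ × ℝ) (S : Set (ℝ × ℝ)) : Prop :=
  ∃ nv : ℝ × ℝ, nv ≠ 0 ∧ dot2 nv (Q - P) = 0 ∧ ∀ A ∈ S, 0 < dot2 nv (A - P)

/-- The points of `S` lie (non-strictly) to one side of the segment `[P,Q]`:
there is a line containing `[P,Q]` bounding a closed half-plane containing `S`. -/
def WeakSide (P Q : ℝ × ℝ) (S : Set (ℝ × ℝ)) : Prop :=
  ∃ nv : ℝ × ℝ, nv ≠ 0 ∧ dot2 nv (Q - P) = 0 ∧ ∀ A ∈ S, 0 ≤ dot2 nv (A - P)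

/-- The successor index modulo `n`. -/
def nxt {n : ℕ} (i : Fin n) : Fin n :=
  ⟨(i.val + 1) % n, Nat.mod_lt _ (Nat.zero_lt_of_lt i.isLt)⟩

/-- The polygon `(V 0, …, V (n-1))` is convex: the union of its edges equals
the boundary of the convex hull of its vertex set. -/
def IsConvexPolygon {n : ℕ} (V : Fin n → ℝ × ℝ) : Prop :=
  (⋃ i : Fin n, segment ℝ (V i) (V (nxt i))) = frontier (convexHull ℝ (Set.range V))

/-- Quasi-strict: no two adjacent vertices are collinear with any other vertex. -/
def QuasiStrict {n : ℕ} (V : Fin n → ℝ × ℝ) : Prop :=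
  ∀ i j : Fin n, j ≠ i → j ≠ nxt i → ¬ Collinear ℝ ({V i, V (nxt i), V j} : Set (ℝ × ℝ))

/-- Strict: no three vertices with distinct indices are collinear. -/
def StrictPoly {n : ℕ} (V : Fin n → ℝ × ℝ) : Prop :=
  ∀ i j k : Fin n, i ≠ j → i ≠ k → j ≠ k → ¬ Collinear ℝ ({V i, V j, V k} : Set (ℝ × ℝ))

/-- The vertices other than the endpoints of edge `i`. -/
def OtherVerts {n : ℕ} (V : Fin n → ℝ × ℝ) (i : Fin n) : Set (ℝ × ℝ) :=
  {P | ∃ j : Fin n, j ≠ i ∧ j ≠ nxt i ∧ P = V j}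

/-- The polygon is strictly to one side of each of its edges. -/
def StrictlyToOneSide {n : ℕ} (V : Fin n → ℝ × ℝ) : Prop :=
  ∀ i : Fin n, StrictSide (V i) (V (nxt i)) (OtherVerts V i)

/-- The polygon is (non-strictly) to one side of each of its edges. -/
def ToOneSide {n : ℕ} (V : Fin n → ℝ × ℝ) : Prop :=
  ∀ i : Fin n, WeakSide (V i) (V (nxt i)) (OtherVerts V i)

open Module

theorem Finset.exists_mem_ne_ne {α : Type*} {s : Finset α} (hs : 2 < s.card) (p q : α) :
    ∃ r ∈ s, r ≠ p ∧ r ≠ q := by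
  classical
  obtain ⟨r, hr, hrpq⟩ := Finset.exists_mem_notMem_of_card_lt_card
    ((Finset.card_le_two (a := p) (b := q)).trans_lt hs)
  simp only [Finset.mem_insert, Finset.mem_singleton, not_or] at hrpq
  exact ⟨r, hr, hrpq⟩

theorem exists_mem_openSegment_notMem {E : Type*} [AddCommGroup E] [Module ℝ E] {s : Set E}
    (hs : s.Finite) {x y : E} (hxy : x ≠ y) : ∃ p ∈ openSegment ℝ x y, p ∉ s := by
  rw [openSegment_eq_image_lineMap]
  exact ((Set.Ioo_infinite zero_lt_one).image
    (AffineMap.lineMap_injective ℝ hxy).injOn).exists_notMem_finite hs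

theorem Collinear.mem_openSegment_or {E : Type*} [AddCommGroup E] [Module ℝ E] {x y z : E}
    (h : Collinear ℝ {x, y, z}) (hxy : x ≠ y) (hxz : x ≠ z) (hyz : y ≠ z) :
    y ∈ openSegment ℝ x z ∨ z ∈ openSegment ℝ y x ∨ x ∈ openSegment ℝ z y := by
  rcases h.wbtw_or_wbtw_or_wbtw with h | h | h
  · exact .inl (mem_openSegment_of_ne_left_right hxy hyz.symm h.mem_segment)
  · exact .inr (.inl (mem_openSegment_of_ne_left_right hyz hxz h.mem_segment))
  · exact .inr (.inr (mem_openSegment_of_ne_left_right hxz.symm hxy.symm h.mem_segment))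

section Planar

variable {k E : Type*} [Field k] [AddCommGroup E] [Module k E] [FiniteDimensional k E]

theorem collinear_of_forall_apply_eq (hE : finrank k E = 2) {f : E →ₗ[k] k} (hf : f ≠ 0)
    {s : Set E} {c : k} (hs : ∀ x ∈ s, f x = c) : Collinear k s := by
  have hker : vectorSpan k s ≤ LinearMap.ker f := by
    rw [vectorSpan_def, Submodule.span_le]
    rintro _ ⟨x, hx, y, hy, rfl⟩
    simp [hs x hx, hs y hy]
  have := Module.Dual.finrank_ker_add_one_of_ne_zero hf
  rw [collinear_iff_finrank_le_one]
  have := Submodule.finrank_mono hker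
  omega

theorem affineSpan_eq_top_of_not_collinear (hE : finrank k E = 2) {s : Set E}
    (hs : ¬Collinear k s) : affineSpan k s = ⊤ := by
  have hne : s.Nonempty :=
    Set.nonempty_iff_ne_empty.2 (by rintro rfl; exact hs (collinear_empty k E))
  rw [AffineSubspace.affineSpan_eq_top_iff_vectorSpan_eq_top_of_nonempty k E E hne]
  by_contra htop
  have := Submodule.finrank_lt htop
  exact hs (collinear_iff_finrank_le_one.2 (by omega))

end Planar

theorem Convex.exists_forall_le_of_notMem_interior {E : Type*} [NormedAddCommGroup E]
    [NormedSpace ℝ E] {K : Set E} (hK : Convex ℝ K) (hint : (interior K).Nonempty) {x : E}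
    (hx : x ∉ interior K) :
    ∃ f : StrongDual ℝ E, (∀ y ∈ K, f y ≤ f x) ∧ ∀ y ∈ interior K, f y < f x := by
  obtain ⟨f, hf⟩ := geometric_hahn_banach_open_point hK.interior isOpen_interior hx
  refine ⟨f, fun y hy => ?_, hf⟩
  have hcl : closure (interior K) ⊆ {y | f y ≤ f x} :=
    closure_minimal (fun y hy => (hf y hy).le) (isClosed_le f.continuous continuous_const)
  rw [hK.closure_interior_eq_closure_of_nonempty_interior hint] at hcl
  exact hcl (subset_closure hy)

section Polygon

variable {n : ℕ} {V : Fin n → ℝ × ℝ}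

theorem nxt_ne_self (hn : 2 ≤ n) (i : Fin n) : nxt i ≠ i := by
  intro h
  have h' : (i.val + 1) % n = i.val := congrArg Fin.val h
  rcases Nat.lt_or_ge (i.val + 1) n with hlt | hge
  · rw [Nat.mod_eq_of_lt hlt] at h'
    omega
  · rw [show i.val + 1 = n by omega, Nat.mod_self] at h'
    omega

theorem StrictPoly.quasiStrict (hS : StrictPoly V) : QuasiStrict V := fun i j hji hjn =>
  hS i (nxt i) j (nxt_ne_self (Fin.nontrivial_iff_two_le.1 ⟨i, j, hji.symm⟩) i).symm
    hji.symm hjn.symm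

theorem Fin.exists_ne_ne (hn : 3 ≤ n) (p q : Fin n) : ∃ r, r ≠ p ∧ r ≠ q := by
  obtain ⟨r, -, hr⟩ := Finset.exists_mem_ne_ne (s := Finset.univ) (by rwa [Finset.card_fin]) p q
  exact ⟨r, hr⟩

theorem QuasiStrict.injective (hQ : QuasiStrict V) (hn : 3 ≤ n) : Function.Injective V := by
  intro p q hpq
  by_contra hne
  by_cases hq : q = nxt p
  · obtain ⟨r, hrp, hrq⟩ := Fin.exists_ne_ne hn p (nxt p)
    apply hQ p r hrp hrq
    rw [← hq, ← hpq, Set.insert_eq_of_mem (Set.mem_insert _ _)]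
    exact collinear_pair ℝ _ _
  · apply hQ p q (Ne.symm hne) hq
    rw [← hpq, Set.insert_comm, Set.pair_comm, Set.insert_eq_of_mem (Set.mem_singleton _)]
    exact collinear_pair ℝ _ _

theorem QuasiStrict.not_collinear_range (hQ : QuasiStrict V) (hn : 3 ≤ n) :
    ¬Collinear ℝ (Set.range V) := by
  let i : Fin n := ⟨0, by omega⟩
  obtain ⟨r, hri, hrn⟩ := Fin.exists_ne_ne hn i (nxt i)
  refine fun h => hQ i r hri hrn (h.subset ?_)
  rintro _ (rfl | rfl | rfl) <;> exact Set.mem_range_self _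

theorem QuasiStrict.interior_convexHull_nonempty (hQ : QuasiStrict V) (hn : 3 ≤ n) :
    (interior (convexHull ℝ (Set.range V))).Nonempty :=
  interior_convexHull_nonempty_iff_affineSpan_eq_top.2 <|
    affineSpan_eq_top_of_not_collinear (by simp) (hQ.not_collinear_range hn)

theorem IsConvexPolygon.mem_frontier (hV : IsConvexPolygon V) (i : Fin n) :
    V i ∈ frontier (convexHull ℝ (Set.range V)) :=
  hV ▸ Set.mem_iUnion_of_mem i (left_mem_segment ℝ _ _)

theorem IsConvexPolygon.exists_mem_segment (hV : IsConvexPolygon V) {x : ℝ × ℝ}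
    (hx : x ∈ frontier (convexHull ℝ (Set.range V))) : ∃ j, x ∈ segment ℝ (V j) (V (nxt j)) :=
  Set.mem_iUnion.1 (hV ▸ hx)

theorem IsConvexPolygon.exists_collinear_edge (hV : IsConvexPolygon V)
    (hint : (interior (convexHull ℝ (Set.range V))).Nonempty) {a b c : Fin n}
    (hac : V a ≠ V c) (hb : V b ∈ openSegment ℝ (V a) (V c)) :
    ∃ j, Collinear ℝ {V j, V (nxt j), V a, V b, V c} := by
  set K := convexHull ℝ (Set.range V)
  have hK : Convex ℝ K := convex_convexHull ℝ _
  have hVK : ∀ i, V i ∈ K := fun i => subset_convexHull ℝ _ (Set.mem_range_self i)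
  obtain ⟨f, hfK, hfint⟩ := hK.exists_forall_le_of_notMem_interior hint (hV.mem_frontier b).2
  set F := f.toExposed K
  have hFext : IsExtreme ℝ K F := ContinuousLinearMap.toExposed.isExposed.isExtreme
  have hF : ∀ x ∈ F, f x = f (V b) := fun x hx => le_antisymm (hfK x hx.1) (hx.2 _ (hVK b))
  have hbF : V b ∈ F := ⟨hVK b, hfK⟩
  have haF := hFext.left_mem_of_mem_openSegment (hVK a) (hVK c) hbF hb
  have hcF := hFext.right_mem_of_mem_openSegment (hVK a) (hVK c) hbF hb
  obtain ⟨p, hp, hpV⟩ := exists_mem_openSegment_notMem (Set.finite_range V) hac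
  have hpF : p ∈ F :=
    (ContinuousLinearMap.toExposed.isExposed.convex hK).openSegment_subset haF hcF hp
  have hp_fr : p ∈ frontier K := ⟨subset_closure hpF.1, fun h => (hfint p h).ne (hF p hpF)⟩
  obtain ⟨j, hj⟩ := hV.exists_mem_segment hp_fr
  have hpj : p ∈ openSegment ℝ (V j) (V (nxt j)) :=
    mem_openSegment_of_ne_left_right (fun h => hpV ⟨j, h⟩) (fun h => hpV ⟨nxt j, h⟩) hj
  have hjF := hFext.left_mem_of_mem_openSegment (hVK j) (hVK (nxt j)) hpF hpj
  have hj'F := hFext.right_mem_of_mem_openSegment (hVK j) (hVK (nxt j)) hpF hpj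
  obtain ⟨y, hy⟩ := hint
  have hf : (f : ℝ × ℝ →ₗ[ℝ] ℝ) ≠ 0 := fun h => (hfint y hy).ne <| by
    simpa [sub_eq_zero] using LinearMap.congr_fun h (y - V b)
  refine ⟨j, collinear_of_forall_apply_eq (by simp) hf (c := f (V b)) ?_⟩
  rintro x (rfl | rfl | rfl | rfl | rfl)
  exacts [hF _ hjF, hF _ hj'F, hF _ haF, rfl, hF _ hcF]

theorem QuasiStrict.notMem_openSegment (hQ : QuasiStrict V) (hV : IsConvexPolygon V)
    (hn : 3 ≤ n) {a b c : Fin n} (hab : a ≠ b) (hac : a ≠ c) (hbc : b ≠ c) :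
    V b ∉ openSegment ℝ (V a) (V c) := by
  intro hb
  obtain ⟨j, hj⟩ :=
    hV.exists_collinear_edge (hQ.interior_convexHull_nonempty hn) ((hQ.injective hn).ne hac) hb
  obtain ⟨m, hm, hmj, hmj'⟩ := Finset.exists_mem_ne_ne
    (Finset.card_eq_three.2 ⟨a, b, c, hab, hac, hbc, rfl⟩).ge j (nxt j)
  refine hQ j m hmj hmj' (hj.subset (Set.insert_subset_insert (Set.insert_subset_insert ?_)))
  simp only [Finset.mem_insert, Finset.mem_singleton] at hm
  rcases hm with rfl | rfl | rfl <;> simp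

end Polygon

/-- Pinelis, Lemma 7: a convex polygon is strict iff it is quasi-strict. -/
theorem stmt_12 (n : ℕ) (V : Fin n → ℝ × ℝ) (h : IsConvexPolygon V) :
    StrictPoly V ↔ QuasiStrict V := by
  refine ⟨StrictPoly.quasiStrict, fun hQ a b c hab hac hbc hcol => ?_⟩
  have hn : 3 ≤ n := by
    simpa using (Finset.card_eq_three.2 ⟨a, b, c, hab, hac, hbc, rfl⟩).ge.trans
      (Finset.card_le_univ _)
  have hinj := hQ.injective hn
  rcases hcol.mem_openSegment_or (hinj.ne hab) (hinj.ne hac) (hinj.ne hbc) with hb | hc | ha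
  · exact hQ.notMem_openSegment h hn hab hac hbc hb
  · exact hQ.notMem_openSegment h hn hbc hab.symm hac.symm hc
  · exact hQ.notMem_openSegment h hn hac.symm hbc.symm hab ha
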